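/- Let S be the two-sided walk and define, for the hard-wall reflected forward chain \widehat{l} (stationary, confined to [−Γ, Γ], with increments matching 2S except for the reflection), the random times on the negative half-line: s^↓(Γ) := the most recent time before 0 at which the time-reversed walk has a Γ-decrease, v^↓(Γ) := the corresponding location of the Γ-maximum, and analogously s^↑(Γ), v^↑(Γ). Then \widehat{l}_0 = Γ − 2 S_{v^↓(Γ)} on the event {s^↓(Γ) > s^↑(Γ)}, and \widehat{l}_0 = −Γ − 2 S_{v^↑(Γ)} on the event {s^↑(Γ) > s^↓(Γ)}. -/
import Mathlib

/-- Hard-wall projection onto `[-Γ, Γ]`. -/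
noncomputable def hatb (Γ x : ℝ) : ℝ := max (-Γ) (min Γ x)

lemma hatb_le {Γ : ℝ} (hΓ : 0 ≤ Γ) (x : ℝ) : hatb Γ x ≤ Γ :=
  max_le (by linarith) (min_le_left _ _)

lemma neg_le_hatb (Γ x : ℝ) : -Γ ≤ hatb Γ x := le_max_left _ _

lemma hatb_of_mem {Γ x : ℝ} (h1 : -Γ ≤ x) (h2 : x ≤ Γ) : hatb Γ x = x := by
  unfold hatb; rw [min_eq_right h2, max_eq_right h1]

lemma hatb_of_ge {Γ x : ℝ} (hΓ : 0 ≤ Γ) (h2 : Γ ≤ x) : hatb Γ x = Γ := by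
  unfold hatb; rw [min_eq_left h2, max_eq_right (by linarith)]

lemma hatb_neg {Γ : ℝ} (hΓ : 0 ≤ Γ) (x : ℝ) : hatb Γ (-x) = -hatb Γ x := by
  unfold hatb
  rcases le_total x Γ with h1 | h1 <;> rcases le_total (-Γ) x with h2 | h2 <;>
    simp [min_def, max_def] <;> split_ifs <;> linarith

/-- Growth lemma: as long as `L` never touches the ceiling on `(a, b]`,
it grows at least as fast as `2 S`. -/
lemma growth (Γ : ℝ) (hΓ : 0 ≤ Γ) (h S : ℤ → ℝ)
    (hSrec : ∀ n : ℤ, S n - S (n - 1) = h n)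
    (L : ℤ → ℝ) (hL : ∀ n : ℤ, L n = hatb Γ (L (n - 1) + 2 * h n)) :
    ∀ a b : ℤ, a ≤ b → (∀ k : ℤ, a < k → k ≤ b → L k < Γ) →
      L a + 2 * (S b - S a) ≤ L b := by
  intro a
  refine Int.le_induction ?_ ?_
  · intro _; simp
  · intro n hn ih hlt
    have h1 : L (n + 1) < Γ := hlt (n + 1) (by omega) le_rfl
    have hLn1 : L (n + 1) = hatb Γ (L n + 2 * h (n + 1)) := by
      have := hL (n + 1); rw [show n + 1 - 1 = n by ring] at this; exact this
    have hx : L n + 2 * h (n + 1) ≤ L (n + 1) := by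
      rcases le_total (L n + 2 * h (n + 1)) Γ with hc | hc
      · rw [hLn1]
        unfold hatb
        rw [min_eq_right hc]
        exact le_max_right _ _
      · exfalso
        rw [hLn1, hatb_of_ge hΓ hc] at h1
        exact lt_irrefl _ h1
    have h2 := ih (fun k hk1 hk2 => hlt k hk1 (by omega))
    have h3 : S (n + 1) - S n = h (n + 1) := by
      have := hSrec (n + 1); rw [show n + 1 - 1 = n by ring] at this; exact this
    linarith

/-- One-sided main lemma: if there is a `Γ`-decrease of the reversed walk by time `tdown`,
no `Γ`-increase by time `tdown`, and `udown` is an arg-max of `S^{rv}` on `[0, tdown]`,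
then `L 0 = Γ - 2 S (-udown)`. -/
lemma main_lemma (Γ : ℝ) (hΓ : 0 < Γ) (h S : ℤ → ℝ)
    (hS0 : S 0 = 0) (hSrec : ∀ n : ℤ, S n - S (n - 1) = h n)
    (L : ℤ → ℝ) (hL : ∀ n : ℤ, L n = hatb Γ (L (n - 1) + 2 * h n))
    (tdown udown : ℕ)
    (hdec : ∃ i j : ℕ, i ≤ j ∧ j ≤ tdown ∧ Γ ≤ S (-(i : ℤ)) - S (-(j : ℤ)))
    (hnoinc : ∀ i j : ℕ, i ≤ j → j ≤ tdown → S (-(j : ℤ)) - S (-(i : ℤ)) < Γ)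
    (hud : udown ≤ tdown)
    (hmax : ∀ i : ℕ, i ≤ tdown → S (-(i : ℤ)) ≤ S (-(udown : ℤ))) :
    L 0 = Γ - 2 * S (-(udown : ℤ)) := by
  obtain ⟨i, j, hij, hjtd, hdec⟩ := hdec
  set A : ℤ := -(udown : ℤ) with hA
  have hnoZ : ∀ a b : ℤ, -(tdown : ℤ) ≤ a → a ≤ b → b ≤ 0 → S a - S b < Γ := by
    intro a b ha hab hb
    have := hnoinc (-b).toNat (-a).toNat (by omega) (by omega)
    rwa [show -(((-a).toNat : ℤ)) = a by omega, show -(((-b).toNat : ℤ)) = b by omega] at this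
  have hmaxZ : ∀ b : ℤ, -(tdown : ℤ) ≤ b → b ≤ 0 → S b ≤ S A := by
    intro b h1 h2
    have := hmax (-b).toNat (by omega)
    rwa [show -(((-b).toNat : ℤ)) = b by omega] at this
  have hLb : ∀ n : ℤ, -Γ ≤ L n ∧ L n ≤ Γ := fun n => by
    rw [hL n]; exact ⟨neg_le_hatb _ _, hatb_le hΓ.le _⟩
  have hudj : (udown : ℤ) < (j : ℤ) := by
    by_contra hc
    push_neg at hc
    have h1 : S (-(i : ℤ)) ≤ S A := hmax i (le_trans hij hjtd)
    have h2 := hnoZ A (-(j : ℤ)) (by omega) (by omega) (by omega)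
    linarith
  set T : Finset ℤ := (Finset.Icc (-(j : ℤ) + 1) A).filter (fun m => L m = Γ) with hT
  have hmemT : ∀ m : ℤ, m ∈ T ↔ (-(j : ℤ) + 1 ≤ m ∧ m ≤ A) ∧ L m = Γ := by
    intro m; simp [hT, Finset.mem_filter, Finset.mem_Icc]
  have hTne : T.Nonempty := by
    by_contra hemp
    rw [Finset.not_nonempty_iff_eq_empty] at hemp
    have hallk : ∀ k : ℤ, -(j : ℤ) < k → k ≤ A → L k < Γ := by
      intro k h1 h2
      rcases lt_or_eq_of_le (hLb k).2 with hh | hh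
      · exact hh
      · exfalso
        have hk : k ∈ T := (hmemT k).2 ⟨⟨by omega, h2⟩, hh⟩
        rw [hemp] at hk
        exact absurd hk (Finset.notMem_empty k)
    have hg := growth Γ hΓ.le h S hSrec L hL (-(j : ℤ)) A (by omega) hallk
    have h1 : S (-(i : ℤ)) ≤ S A := hmax i (le_trans hij hjtd)
    have h2 := (hLb (-(j : ℤ))).1
    have h3 := (hLb A).2
    have hLA : L A = Γ := le_antisymm h3 (by linarith)
    have hk : A ∈ T := (hmemT A).2 ⟨⟨by omega, le_rfl⟩, hLA⟩
    rw [hemp] at hk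
    exact absurd hk (Finset.notMem_empty A)
  set m₀ : ℤ := T.max' hTne with hm₀
  obtain ⟨⟨hm₀l, hm₀r⟩, hm₀Γ⟩ := (hmemT m₀).1 (T.max'_mem hTne)
  have hm₀td : -(tdown : ℤ) ≤ m₀ := by omega
  have hind1 : ∀ k : ℤ, m₀ ≤ k → k ≤ A → L k = Γ + 2 * (S k - S m₀) := by
    refine Int.le_induction ?_ ?_
    · intro _; rw [hm₀Γ]; ring
    · intro n hn ih hle
      have ihn := ih (by omega)
      have hs : S (n + 1) - S n = h (n + 1) := by
        have := hSrec (n + 1); rw [show n + 1 - 1 = n by ring] at this; exact this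
      have hLn1 : L (n + 1) = hatb Γ (L n + 2 * h (n + 1)) := by
        have := hL (n + 1); rw [show n + 1 - 1 = n by ring] at this; exact this
      have hxval : L n + 2 * h (n + 1) = Γ + 2 * (S (n + 1) - S m₀) := by
        rw [ihn]; linarith
      have hxle : L n + 2 * h (n + 1) ≤ Γ := by
        by_contra hc
        push_neg at hc
        have hceil : L (n + 1) = Γ := by rw [hLn1, hatb_of_ge hΓ.le hc.le]
        have hmem : n + 1 ∈ T := (hmemT _).2 ⟨⟨by omega, hle⟩, hceil⟩
        have hle' := Finset.le_max' T _ hmem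
        rw [← hm₀] at hle'
        omega
      have hxge : -Γ ≤ L n + 2 * h (n + 1) := by
        by_contra hc
        push_neg at hc
        have h1 : Γ ≤ S m₀ - S (n + 1) := by linarith
        have h2 := hnoZ m₀ (n + 1) hm₀td (by omega) (by omega)
        linarith
      rw [hLn1, hatb_of_mem hxge hxle, hxval]
  have hLAeq : L A = Γ := by
    have h1 := hind1 A hm₀r le_rfl
    have h2 := (hLb A).2
    have h3 := hmaxZ m₀ hm₀td (by omega)
    linarith
  have hind2 : ∀ k : ℤ, A ≤ k → k ≤ 0 → L k = Γ + 2 * (S k - S A) := by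
    refine Int.le_induction ?_ ?_
    · intro _; rw [hLAeq]; ring
    · intro n hn ih hle
      have ihn := ih (by omega)
      have hs : S (n + 1) - S n = h (n + 1) := by
        have := hSrec (n + 1); rw [show n + 1 - 1 = n by ring] at this; exact this
      have hLn1 : L (n + 1) = hatb Γ (L n + 2 * h (n + 1)) := by
        have := hL (n + 1); rw [show n + 1 - 1 = n by ring] at this; exact this
      have hxval : L n + 2 * h (n + 1) = Γ + 2 * (S (n + 1) - S A) := by
        rw [ihn]; linarith
      have hxle : L n + 2 * h (n + 1) ≤ Γ := by
        by_contra hc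
        push_neg at hc
        have h1 : S A < S (n + 1) := by linarith
        have h2 := hmaxZ (n + 1) (by omega) hle
        linarith
      have hxge : -Γ ≤ L n + 2 * h (n + 1) := by
        by_contra hc
        push_neg at hc
        have h1 : Γ ≤ S A - S (n + 1) := by linarith
        have h2 := hnoZ A (n + 1) (by omega) (by omega) hle
        linarith
      rw [hLn1, hatb_of_mem hxge hxle, hxval]
  have hfin := hind2 0 (by omega) le_rfl
  rw [hS0] at hfin
  rw [hfin]; ring

/-- Explicit representation of the stationary hard-wall reflected chain at time `0`
in terms of the time-reversed walk `S^{rv}_n = S_{-n}`: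
`\widehat{l}_0 = Γ − 2 S_{v^↓(Γ)}` on `{s^↓(Γ) > s^↑(Γ)}` and
`\widehat{l}_0 = −Γ − 2 S_{v^↑(Γ)}` on `{s^↑(Γ) > s^↓(Γ)}`, where
`s^↓ = −t^↓_{S^{rv}}`, `v^↓ = −u^↓_{S^{rv}}`, etc.  The times `t^↓, u^↓, t^↑, u^↑`
for `S^{rv}` are characterised by the hypotheses below. -/
theorem stmt_15 (Γ : ℝ) (hΓ : 0 < Γ) (h S : ℤ → ℝ)
    (hS0 : S 0 = 0) (hSrec : ∀ n : ℤ, S n - S (n - 1) = h n)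
    (L : ℤ → ℝ) (hL : ∀ n : ℤ, L n = hatb Γ (L (n - 1) + 2 * h n))
    (tdown tup udown uup : ℕ)
    -- `tdown` is the first time `n ≥ 1` at which the time-reversed walk has a `Γ`-decrease
    (htdown : 1 ≤ tdown ∧
      (∃ i j : ℕ, i ≤ j ∧ j ≤ tdown ∧ Γ ≤ S (-(i : ℤ)) - S (-(j : ℤ))) ∧
      ∀ n : ℕ, 1 ≤ n → n < tdown →
        ¬ ∃ i j : ℕ, i ≤ j ∧ j ≤ n ∧ Γ ≤ S (-(i : ℤ)) - S (-(j : ℤ)))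
    -- `tup` is the first time `n ≥ 1` at which the time-reversed walk has a `Γ`-increase
    (htup : 1 ≤ tup ∧
      (∃ i j : ℕ, i ≤ j ∧ j ≤ tup ∧ Γ ≤ S (-(j : ℤ)) - S (-(i : ℤ))) ∧
      ∀ n : ℕ, 1 ≤ n → n < tup →
        ¬ ∃ i j : ℕ, i ≤ j ∧ j ≤ n ∧ Γ ≤ S (-(j : ℤ)) - S (-(i : ℤ)))
    -- `udown` is the first location of the maximum of `S^{rv}` on `[0, tdown]`
    (hudown : udown ≤ tdown ∧ (∀ i : ℕ, i ≤ tdown → S (-(i : ℤ)) ≤ S (-(udown : ℤ))) ∧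
      ∀ k : ℕ, k < udown → S (-(k : ℤ)) < S (-(udown : ℤ)))
    -- `uup` is the first location of the minimum of `S^{rv}` on `[0, tup]`
    (huup : uup ≤ tup ∧ (∀ i : ℕ, i ≤ tup → S (-(uup : ℤ)) ≤ S (-(i : ℤ))) ∧
      ∀ k : ℕ, k < uup → S (-(uup : ℤ)) < S (-(k : ℤ))) :
    (tdown < tup → L 0 = Γ - 2 * S (-(udown : ℤ))) ∧
    (tup < tdown → L 0 = -Γ - 2 * S (-(uup : ℤ))) := by
  obtain ⟨htd1, hdecdown, htdmin⟩ := htdown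
  obtain ⟨htu1, hdecup, htumin⟩ := htup
  constructor
  · intro hlt
    exact main_lemma Γ hΓ h S hS0 hSrec L hL tdown udown hdecdown
      (fun i j hij hj => by
        by_contra hc
        push_neg at hc
        exact htumin tdown htd1 hlt ⟨i, j, hij, hj, hc⟩)
      hudown.1 hudown.2.1
  · intro hlt
    have key := main_lemma Γ hΓ (fun n => -h n) (fun n => -S n)
      (by show -S 0 = 0; rw [hS0]; ring)
      (fun n => by show -S n - -S (n - 1) = -h n; have := hSrec n; linarith)
      (fun n => -L n)
      (fun n => by
        show -L n = hatb Γ (-L (n - 1) + 2 * -h n)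
        rw [show -L (n - 1) + 2 * -h n = -(L (n - 1) + 2 * h n) by ring,
          hatb_neg hΓ.le, ← hL n])
      tup uup
      (by
        obtain ⟨i, j, hij, hj, hd⟩ := hdecup
        exact ⟨i, j, hij, hj, by show Γ ≤ -S (-(i:ℤ)) - -S (-(j:ℤ)); linarith⟩)
      (fun i j hij hj => by
        show -S (-(j:ℤ)) - -S (-(i:ℤ)) < Γ
        by_contra hc
        push_neg at hc
        exact htdmin tup htu1 hlt ⟨i, j, hij, hj, by linarith⟩)
      huup.1
      (fun i hi => by
        show -S (-(i:ℤ)) ≤ -S (-(uup:ℤ))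
        have := huup.2.1 i hi
        linarith)
    have key' : -L 0 = Γ - 2 * -S (-(uup : ℤ)) := key
    linarith
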